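/- Let (M, 𝒜) be an uncertainty matroid on a finite ground set E. If an element e ∈ E is both red and blue, then e is certain. -/

import Mathlib

open Matroid

variable {α : Type*}

/-- `A` is an uncertainty area function for `M`: each element of the ground set gets a
nonempty bounded set of reals. -/
def IsAreaFun (M : Matroid α) (A : α → Set ℝ) : Prop :=
  ∀ e ∈ M.E, (A e).Nonempty ∧ BddBelow (A e) ∧ BddAbove (A e)

/-- A realization: a weight function with `w e ∈ A e` for every element of the ground set. -/
def Realization (M : Matroid α) (A : α → Set ℝ) (w : α → ℝ) : Prop :=
  ∀ e ∈ M.E, w e ∈ A e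

/-- The total `w`-weight of a set. -/
noncomputable def setWeight (w : α → ℝ) (T : Set α) : ℝ := ∑ᶠ e ∈ T, w e

/-- A `w`-basis: a basis of `M` of minimum total `w`-weight. -/
def IsMinBasis (M : Matroid α) (w : α → ℝ) (T : Set α) : Prop :=
  M.IsBase T ∧ ∀ B, M.IsBase B → setWeight w T ≤ setWeight w B

/-- A uniformly optimal basis (an `A`-basis): a `w`-basis for every realization `w`. -/
def IsUOB (M : Matroid α) (A : α → Set ℝ) (T : Set α) : Prop :=
  ∀ w, Realization M A w → IsMinBasis M w T

/-- An element is certain if its area is a singleton. -/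
def Certain (A : α → Set ℝ) (e : α) : Prop := ∃ r : ℝ, A e = {r}

/-- `e` is blue if every realization admits a minimum weight basis containing `e`. -/
def Blue (M : Matroid α) (A : α → Set ℝ) (e : α) : Prop :=
  ∀ w, Realization M A w → ∃ T, IsMinBasis M w T ∧ e ∈ T

/-- `e` is red if every realization admits a minimum weight basis avoiding `e`. -/
def Red (M : Matroid α) (A : α → Set ℝ) (e : α) : Prop :=
  ∀ w, Realization M A w → ∃ T, IsMinBasis M w T ∧ e ∉ T

/-- `e` is colored if it is blue or red. -/
def Colored (M : Matroid α) (A : α → Set ℝ) (e : α) : Prop :=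
  Blue M A e ∨ Red M A e

/-! Suppose `a < b` both lie in the area of `e`. Fix a realization `w` with
`w e = a` and let `w'` be `w` with the weight of `e` raised to `b`. Since `e` is red, some
`w`-basis `S` avoids `e`; since `e` is blue, some `w'`-basis `T` contains `e`. Raising the weight
of `e` leaves the weight of `S` unchanged and raises that of `T` by `b - a > 0`, so
`w'(T) = w(T) + (b - a) > w(S) = w'(S)`, contradicting the minimality of `T`. -/

section setWeight

variable [DecidableEq α] {w : α → ℝ} {T : Set α} {e : α}

lemma setWeight_update_of_notMem (he : e ∉ T) (b : ℝ) :
    setWeight (Function.update w e b) T = setWeight w T :=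
  finsum_mem_congr rfl fun _ hx ↦ Function.update_of_ne (ne_of_mem_of_not_mem hx he) _ _

lemma setWeight_update_of_mem (hT : T.Finite) (he : e ∈ T) (b : ℝ) :
    setWeight (Function.update w e b) T = setWeight w T + (b - w e) := by
  have hT' : T = insert e (T \ {e}) := by rw [Set.insert_sdiff_singleton, Set.insert_eq_of_mem he]
  have he' : e ∉ T \ {e} := fun h ↦ h.2 rfl
  have hrest := setWeight_update_of_notMem (w := w) he' b
  unfold setWeight at hrest ⊢
  rw [hT', finsum_mem_insert _ he' hT.sdiff, finsum_mem_insert _ he' hT.sdiff, hrest,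
    Function.update_self]
  ring

end setWeight

section Realization

variable {M : Matroid α} {A : α → Set ℝ}

lemma IsAreaFun.exists_realization (hA : IsAreaFun M A) : ∃ w, Realization M A w := by
  choose! w hw using fun e he ↦ (hA e he).1
  exact ⟨w, hw⟩

lemma Realization.update [DecidableEq α] {w : α → ℝ} (hw : Realization M A w) {e : α}
    {b : ℝ} (hb : b ∈ A e) : Realization M A (Function.update w e b) := by
  intro x hx
  rcases eq_or_ne x e with rfl | hxe
  · simpa using hb
  · simpa [Function.update_of_ne hxe] using hw x hx

lemma IsMinBasis.le_of_update [DecidableEq α] {w : α → ℝ} {S T : Set α} {e : α} {b : ℝ}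
    (hS : IsMinBasis M w S) (heS : e ∉ S) (hT : IsMinBasis M (Function.update w e b) T)
    (heT : e ∈ T) (hTfin : T.Finite) : b ≤ w e := by
  have : setWeight w T + (b - w e) ≤ setWeight w S := by
    calc setWeight w T + (b - w e) = setWeight (Function.update w e b) T :=
          (setWeight_update_of_mem hTfin heT b).symm
      _ ≤ setWeight (Function.update w e b) S := hT.2 S hS.1
      _ = setWeight w S := setWeight_update_of_notMem heS b
  linarith [hS.2 T hT.1]

lemma le_of_red_of_blue (hE : M.E.Finite) (hA : IsAreaFun M A) {e : α} (hred : Red M A e)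
    (hblue : Blue M A e) {a b : ℝ} (ha : a ∈ A e) (hb : b ∈ A e) : b ≤ a := by
  classical
  obtain ⟨w₀, hw₀⟩ := hA.exists_realization
  set w := Function.update w₀ e a
  have hw : Realization M A w := hw₀.update ha
  obtain ⟨S, hS, heS⟩ := hred w hw
  obtain ⟨T, hT, heT⟩ := hblue _ (hw.update hb)
  simpa [w] using hS.le_of_update heS hT heT (hE.subset hT.1.subset_ground)

end Realization

/-- An element that is both red and blue is certain. -/
theorem certain_of_red_blue (M : Matroid α) (A : α → Set ℝ)
    (hE : M.E.Finite) (hA : IsAreaFun M A)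
    (e : α) (he : e ∈ M.E) (hred : Red M A e) (hblue : Blue M A e) :
    Certain A e := by
  obtain ⟨r, hr⟩ := (hA e he).1
  refine ⟨r, Set.eq_singleton_iff_unique_mem.2 ⟨hr, fun b hb ↦ ?_⟩⟩
  exact le_antisymm (le_of_red_of_blue hE hA hred hblue hr hb)
    (le_of_red_of_blue hE hA hred hblue hb hr)
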